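/- arXiv:2108.13310 — 3 statements merged into one kernel-verified Lean document; each statement's English description precedes it below -/
import Mathlib

section
/- Let (X,κ) be a digital image, let Y ⊂ X, and let r : X → Y be a κ-retraction (a κ-continuous map with r|_Y = id_Y). Then the induced maps r_* : 2^X → 2^Y and r_* : K(X,κ') → K(Y,κ'), defined by r_*(A) = r(A), are κ'-retractions. -/
/-- `a` and `b` are adjacent or equal ("⟷≤") with respect to adjacency relation `α`. -/
def AdjEq {A : Type*} (α : A → A → Prop) (a b : A) : Prop := α a b ∨ a = b

/-- `f : (X,κ) → (Y,lam)` is digitally continuous: adjacency is sent to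
adjacency-or-equality. -/
def DigCont {X Y : Type*} (κ : X → X → Prop) (lam : Y → Y → Prop) (f : X → Y) : Prop :=
  ∀ x x', κ x x' → AdjEq lam (f x) (f x')

/-- Continuity of `f` relative to carrier sets: `f` maps `S` into `T` and sends
`α`-adjacent elements of `S` to `β`-adjacent-or-equal elements. -/
def ContOn {A B : Type*} (α : A → A → Prop) (β : B → B → Prop)
    (S : Set A) (T : Set B) (f : A → B) : Prop :=
  (∀ a ∈ S, f a ∈ T) ∧ ∀ a ∈ S, ∀ a' ∈ S, α a a' → AdjEq β (f a) (f a')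

/-- The hyperspace adjacency `κ'`: distinct `A, B` are adjacent iff every point of `A`
is adjacent-or-equal to some point of `B` and vice versa. -/
def HyperAdj {X : Type*} (κ : X → X → Prop) (A B : Finset X) : Prop :=
  A ≠ B ∧ (∀ a ∈ A, ∃ b ∈ B, AdjEq κ a b) ∧ ∀ b ∈ B, ∃ a ∈ A, AdjEq κ b a

/-- A subset `S` is connected w.r.t. adjacency `α`: any two of its points are joined by
a path (finite sequence of consecutively adjacent-or-equal points) lying in `S`. -/
def ConnIn {A : Type*} (α : A → A → Prop) (S : Set A) : Prop :=
  ∀ a ∈ S, ∀ b ∈ S, ∃ (n : ℕ) (p : ℕ → A), p 0 = a ∧ p n = b ∧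
    (∀ i ≤ n, p i ∈ S) ∧ ∀ i < n, AdjEq α (p i) (p (i + 1))

/-- `a` and `b` are joined by a path lying in `S` (i.e. they are in the same
connected component of the graph induced on `S`). -/
def Chain {A : Type*} (α : A → A → Prop) (S : Set A) (a b : A) : Prop :=
  ∃ (n : ℕ) (p : ℕ → A), p 0 = a ∧ p n = b ∧
    (∀ i ≤ n, p i ∈ S) ∧ ∀ i < n, AdjEq α (p i) (p (i + 1))

/-- The carrier of the hyperspace `2^X`: nonempty finite subsets of `X`. -/
def TwoX (X : Type*) : Set (Finset X) := {A | A.Nonempty}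

/-- The carrier of `K(X,κ')`: nonempty finite κ-connected subsets of `X`. -/
def KSet {X : Type*} (κ : X → X → Prop) : Set (Finset X) :=
  {A | A.Nonempty ∧ ConnIn κ (A : Set X)}

/-- A digital homotopy from `f` to `g`, relative to carriers `S`, `T`:
a function `F : S × [0,m] → T` with `F(·,0) = f`, `F(·,m) = g`, all tracks
`t ↦ F(a,t)` are paths, and all time slices `a ↦ F(a,t)` are continuous. -/
def HtpyOn {A B : Type*} (α : A → A → Prop) (β : B → B → Prop)
    (S : Set A) (T : Set B) (f g : A → B) : Prop :=
  ∃ (m : ℕ) (F : A → ℕ → B),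
    (∀ a ∈ S, ∀ t ≤ m, F a t ∈ T) ∧
    (∀ a ∈ S, F a 0 = f a) ∧ (∀ a ∈ S, F a m = g a) ∧
    (∀ a ∈ S, ∀ t < m, AdjEq β (F a t) (F a (t + 1))) ∧
    (∀ t ≤ m, ∀ a ∈ S, ∀ a' ∈ S, α a a' → AdjEq β (F a t) (F a' t))

/-- A digital homotopy from `f` to `g` in exactly `m` steps (on full types). -/
def HtpyN {X Y : Type*} (κ : X → X → Prop) (lam : Y → Y → Prop)
    (f g : X → Y) (m : ℕ) : Prop :=
  ∃ F : X → ℕ → Y,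
    (∀ x, F x 0 = f x) ∧ (∀ x, F x m = g x) ∧
    (∀ x, ∀ t < m, AdjEq lam (F x t) (F x (t + 1))) ∧
    (∀ t ≤ m, DigCont κ lam fun x => F x t)

/-- `f` and `g` are digitally homotopic. -/
def Htpy {X Y : Type*} (κ : X → X → Prop) (lam : Y → Y → Prop) (f g : X → Y) : Prop :=
  ∃ m, HtpyN κ lam f g m

/-- The graphs on carriers `S` and `T` have the same homotopy type. -/
def HtpyEquivOn {A B : Type*} (α : A → A → Prop) (β : B → B → Prop)
    (S : Set A) (T : Set B) : Prop :=
  ∃ (f : A → B) (g : B → A),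
    ContOn α β S T f ∧ ContOn β α T S g ∧
    HtpyOn α α S S (g ∘ f) id ∧ HtpyOn β β T T (f ∘ g) id

/-- The graph on carrier `S` is contractible: the identity is homotopic to a constant. -/
def ContractibleOn {A : Type*} (α : A → A → Prop) (S : Set A) : Prop :=
  ∃ c ∈ S, HtpyOn α α S S id fun _ => c

/-- `Φ`-adjacency of functions: `f ≠ g` and `f(x) ⟷≤ g(x)` for all `x`. -/
def PhiAdj {X Y : Type*} (lam : Y → Y → Prop) (f g : X → Y) : Prop :=
  f ≠ g ∧ ∀ x, AdjEq lam (f x) (g x)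

/-- `Ψ`-adjacency of functions: `f ≠ g` and `x₀ ⟷≤ x₁` implies `f(x₀) ⟷≤ g(x₁)`. -/
def PsiAdj {X Y : Type*} (κ : X → X → Prop) (lam : Y → Y → Prop) (f g : X → Y) : Prop :=
  f ≠ g ∧ ∀ x₀ x₁, AdjEq κ x₀ x₁ → AdjEq lam (f x₀) (g x₁)

/-- `C` is a connected component of the graph induced on the vertex set `V`:
a maximal connected subset of `V`. -/
def IsComponentIn {A : Type*} (α : A → A → Prop) (V C : Set A) : Prop :=
  C ⊆ V ∧ ConnIn α C ∧ ∀ C' : Set A, C' ⊆ V → ConnIn α C' → C ⊆ C' → C' = C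


/- A κ-continuous map sends κ-paths to κ-paths and κ'-adjacent sets to κ'-adjacent-or-equal
images, so `A ↦ r(A)` is κ'-continuous on any family of finite sets closed under taking images by
`r`; it fixes every `A ⊆ Y` because `r` does. Both `2^X` and `K(X,κ')` are such families. -/

lemma AdjEq.map {X Y : Type*} {κ : X → X → Prop} {lam : Y → Y → Prop} {f : X → Y}
    (hf : DigCont κ lam f) {a b : X} (h : AdjEq κ a b) : AdjEq lam (f a) (f b) := by
  rcases h with h | rfl
  · exact hf a b h
  · exact Or.inr rfl

lemma DigCont.hyperAdj_image {X Y : Type*} [DecidableEq Y] {κ : X → X → Prop}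
    {lam : Y → Y → Prop} {f : X → Y} (hf : DigCont κ lam f) {A B : Finset X}
    (h : HyperAdj κ A B) : AdjEq (HyperAdj lam) (A.image f) (B.image f) := by
  by_cases heq : A.image f = B.image f
  · exact Or.inr heq
  obtain ⟨-, hAB, hBA⟩ := h
  refine Or.inl ⟨heq, ?_, ?_⟩
  · simp only [Finset.forall_mem_image, Finset.exists_mem_image]
    intro a ha
    obtain ⟨b, hb, hab⟩ := hAB a ha
    exact ⟨b, hb, hab.map hf⟩
  · simp only [Finset.forall_mem_image, Finset.exists_mem_image]
    intro b hb
    obtain ⟨a, ha, hba⟩ := hBA b hb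
    exact ⟨a, ha, hba.map hf⟩

lemma ConnIn.image {X Y : Type*} {κ : X → X → Prop} {lam : Y → Y → Prop} {f : X → Y}
    (hf : DigCont κ lam f) {S : Set X} (hS : ConnIn κ S) : ConnIn lam (f '' S) := by
  rintro _ ⟨a, ha, rfl⟩ _ ⟨b, hb, rfl⟩
  obtain ⟨n, p, hp0, hpn, hpS, hpadj⟩ := hS a ha b hb
  exact ⟨n, f ∘ p, by simp [hp0], by simp [hpn], fun i hi => Set.mem_image_of_mem f (hpS i hi),
    fun i hi => (hpadj i hi).map hf⟩

lemma image_retraction_contOn_and_fix {X : Type*} [DecidableEq X] {κ : X → X → Prop}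
    {Y : Set X} {r : X → X} (hrY : ∀ x, r x ∈ Y) (hrcont : DigCont κ κ r)
    (hrfix : ∀ y ∈ Y, r y = y) {S : Set (Finset X)} (hS : ∀ A ∈ S, A.image r ∈ S) :
    ContOn (HyperAdj κ) (HyperAdj κ) S {A | A ∈ S ∧ (A : Set X) ⊆ Y} (fun A => A.image r) ∧
      ∀ A ∈ S, (A : Set X) ⊆ Y → A.image r = A := by
  refine ⟨⟨fun A hA => ⟨hS A hA, ?_⟩, fun A _ B _ h => hrcont.hyperAdj_image h⟩, ?_⟩
  · rw [Finset.coe_image]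
    exact (Set.image_subset_range r A).trans (Set.range_subset_iff.2 hrY)
  · intro A _ hAY
    exact (Finset.image_congr fun a ha => hrfix a (hAY ha)).trans A.image_id

theorem stmt1_general {X : Type*} [DecidableEq X]
    (κ : X → X → Prop)
    (Y : Set X) (r : X → X)
    (hrY : ∀ x, r x ∈ Y) (hrcont : DigCont κ κ r) (hrfix : ∀ y ∈ Y, r y = y) :
    (ContOn (HyperAdj κ) (HyperAdj κ) (TwoX X)
        {A | A ∈ TwoX X ∧ (A : Set X) ⊆ Y} (fun A => A.image r) ∧
      ∀ A ∈ TwoX X, (A : Set X) ⊆ Y → A.image r = A) ∧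
    (ContOn (HyperAdj κ) (HyperAdj κ) (KSet κ)
        {A | A ∈ KSet κ ∧ (A : Set X) ⊆ Y} (fun A => A.image r) ∧
      ∀ A ∈ KSet κ, (A : Set X) ⊆ Y → A.image r = A) := by
  refine ⟨image_retraction_contOn_and_fix hrY hrcont hrfix fun A hA => hA.image r,
    image_retraction_contOn_and_fix hrY hrcont hrfix fun A ⟨hne, hconn⟩ => ⟨hne.image r, ?_⟩⟩
  rw [Finset.coe_image]
  exact hconn.image hrcont

/-- if `r : X → Y ⊆ X` is a `κ`-retraction, then the induced maps
`A ↦ r(A)` are `κ'`-retractions `2^X → 2^Y` and `K(X,κ') → K(Y,κ')`. -/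
theorem stmt1 {X : Type*} [DecidableEq X]
    (κ : X → X → Prop)
    (hκsymm : ∀ x y, κ x y → κ y x) (hκirr : ∀ x, ¬ κ x x)
    (Y : Set X) (r : X → X)
    (hrY : ∀ x, r x ∈ Y) (hrcont : DigCont κ κ r) (hrfix : ∀ y ∈ Y, r y = y) :
    (ContOn (HyperAdj κ) (HyperAdj κ) (TwoX X)
        {A | A ∈ TwoX X ∧ (A : Set X) ⊆ Y} (fun A => A.image r) ∧
      ∀ A ∈ TwoX X, (A : Set X) ⊆ Y → A.image r = A) ∧
    (ContOn (HyperAdj κ) (HyperAdj κ) (KSet κ)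
        {A | A ∈ KSet κ ∧ (A : Set X) ⊆ Y} (fun A => A.image r) ∧
      ∀ A ∈ KSet κ, (A : Set X) ⊆ Y → A.image r = A) :=
  stmt1_general κ Y r hrY hrcont hrfix
end

section
/- Let (X,κ) and (Y,λ) be digital images having the same homotopy type. Then (X^X, Φ(κ,κ)) and (Y^Y, Φ(λ,λ)) have the same homotopy type. -/
/-!
A homotopy equivalence `f : X → Y`, `g : Y → X` induces the conjugation maps `φ ↦ f ∘ φ ∘ g`
and `ψ ↦ g ∘ ψ ∘ f`, which are `Φ`-continuous because `Φ`-adjacency is pointwise. Their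
composite is `φ ↦ h ∘ φ ∘ h` with `h = g ∘ f`. A homotopy `H` from `h` to `id` yields a
`Φ`-homotopy from `h ∘ φ ∘ h` to `h ∘ φ` (run `H` inside `φ`) followed by one from `h ∘ φ`
to `φ` (run `H` outside `φ`).
-/

section
variable {A B C A' B' : Type*} {α : A → A → Prop} {β : B → B → Prop} {γ : C → C → Prop}
  {α' : A' → A' → Prop} {β' : B' → B' → Prop}

lemma AdjEq.map_s11 {f : A → B} {a a' : A} (h : AdjEq α a a') (hf : DigCont α β f) :
    AdjEq β (f a) (f a') :=
  h.elim (hf a a') fun h => .inr (congrArg f h)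

lemma DigCont.comp {g : B → C} {f : A → B} (hg : DigCont β γ g) (hf : DigCont α β f) :
    DigCont α γ (g ∘ f) :=
  fun _ _ h => (hf _ _ h).map_s11 hg

lemma digCont_id : DigCont α α id :=
  fun _ _ => .inl

lemma contOn_univ_iff {f : A → B} : ContOn α β Set.univ Set.univ f ↔ DigCont α β f :=
  ⟨fun hf x x' h => hf.2 x trivial x' trivial h,
    fun hf => ⟨fun _ _ => trivial, fun x _ x' _ h => hf x x' h⟩⟩

lemma htpyOn_univ_iff {f g : A → B} : HtpyOn α β Set.univ Set.univ f g ↔ Htpy α β f g := by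
  constructor
  · rintro ⟨m, F, -, hF0, hFm, hFtrack, hFslice⟩
    exact ⟨m, F, fun x => hF0 x trivial, fun x => hFm x trivial,
      fun x => hFtrack x trivial, fun t ht x x' h => hFslice t ht x trivial x' trivial h⟩
  · rintro ⟨m, F, hF0, hFm, hFtrack, hFslice⟩
    exact ⟨m, F, fun _ _ _ _ => trivial, fun x _ => hF0 x, fun x _ => hFm x,
      fun x _ => hFtrack x, fun t ht x _ x' _ h => hFslice t ht x x' h⟩

lemma HtpyOn.trans {S : Set A} {T : Set B} {f g h : A → B}
    (H₁ : HtpyOn α β S T f g) (H₂ : HtpyOn α β S T g h) : HtpyOn α β S T f h := by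
  obtain ⟨m, F, hFT, hF0, hFm, hFtrack, hFslice⟩ := H₁
  obtain ⟨n, G, hGT, hG0, hGn, hGtrack, hGslice⟩ := H₂
  set K : A → ℕ → B := fun a t => if t ≤ m then F a t else G a (t - m) with hK
  -- at the junction `t = m` both descriptions agree, since `F a m = g a = G a 0`
  have hK_late : ∀ a ∈ S, ∀ t, m ≤ t → K a t = G a (t - m) := by
    intro a ha t hmt
    rcases hmt.eq_or_lt with rfl | hlt
    · simp [hK, hFm a ha, hG0 a ha]
    · simp [hK, hlt.not_ge]
  have hK_early : ∀ a, ∀ t ≤ m, K a t = F a t := fun a t ht => if_pos ht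
  refine ⟨m + n, K, ?_, ?_, ?_, ?_, ?_⟩
  · intro a ha t ht
    rcases le_total t m with htm | hmt
    · exact hK_early a t htm ▸ hFT a ha t htm
    · exact hK_late a ha t hmt ▸ hGT a ha (t - m) (by omega)
  · intro a ha
    rw [hK_early a 0 (Nat.zero_le m), hF0 a ha]
  · intro a ha
    rw [hK_late a ha _ (Nat.le_add_right m n), Nat.add_sub_cancel_left, hGn a ha]
  · intro a ha t ht
    by_cases htm : t < m
    · rw [hK_early a t htm.le, hK_early a (t + 1) htm]
      exact hFtrack a ha t htm
    · rw [hK_late a ha t (by omega), hK_late a ha (t + 1) (by omega),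
        show t + 1 - m = t - m + 1 by omega]
      exact hGtrack a ha (t - m) (by omega)
  · intro t ht a ha a' ha' h
    rcases le_total t m with htm | hmt
    · rw [hK_early a t htm, hK_early a' t htm]
      exact hFslice t htm a ha a' ha' h
    · rw [hK_late a ha t hmt, hK_late a' ha' t hmt]
      exact hGslice (t - m) (by omega) a ha a' ha' h

lemma adjEq_phiAdj_of_forall {φ ψ : A → B} (h : ∀ a, AdjEq β (φ a) (ψ a)) :
    AdjEq (PhiAdj β) φ ψ := by
  by_cases hφψ : φ = ψ
  · exact .inr hφψ
  · exact .inl ⟨hφψ, h⟩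

lemma contOn_phiAdj_comp_comp {u : A' → A} {v : B → B'}
    (hu : DigCont α' α u) (hv : DigCont β β' v) :
    ContOn (PhiAdj β) (PhiAdj β') {φ | DigCont α β φ} {ψ | DigCont α' β' ψ}
      (fun φ => v ∘ φ ∘ u) :=
  ⟨fun _ hφ => hv.comp (hφ.comp hu),
    fun _ _ _ _ hφφ' => adjEq_phiAdj_of_forall fun x => (hφφ'.2 (u x)).map_s11 hv⟩

lemma htpyOn_phiAdj_comp_comp_of_htpy_right {u u' : A' → A} {v : B → B'}
    (H : Htpy α' α u u') (hv : DigCont β β' v) :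
    HtpyOn (PhiAdj β) (PhiAdj β') {φ | DigCont α β φ} {ψ | DigCont α' β' ψ}
      (fun φ => v ∘ φ ∘ u) (fun φ => v ∘ φ ∘ u') := by
  obtain ⟨m, F, hF0, hFm, hFtrack, hFslice⟩ := H
  refine ⟨m, fun φ t => v ∘ φ ∘ fun x => F x t, ?_, ?_, ?_, ?_, ?_⟩
  · exact fun φ hφ t ht => hv.comp (hφ.comp (hFslice t ht))
  · exact fun φ _ => funext fun x => by simp [hF0]
  · exact fun φ _ => funext fun x => by simp [hFm]
  · exact fun φ hφ t ht =>
      adjEq_phiAdj_of_forall fun x => ((hFtrack x t ht).map_s11 hφ).map_s11 hv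
  · exact fun t _ _ _ _ _ hφφ' =>
      adjEq_phiAdj_of_forall fun x => (hφφ'.2 (F x t)).map_s11 hv

lemma htpyOn_phiAdj_comp_comp_of_htpy_left {u : A' → A} {v v' : B → B'}
    (hu : DigCont α' α u) (H : Htpy β β' v v') :
    HtpyOn (PhiAdj β) (PhiAdj β') {φ | DigCont α β φ} {ψ | DigCont α' β' ψ}
      (fun φ => v ∘ φ ∘ u) (fun φ => v' ∘ φ ∘ u) := by
  obtain ⟨m, G, hG0, hGm, hGtrack, hGslice⟩ := H
  refine ⟨m, fun φ t => (fun y => G y t) ∘ φ ∘ u, ?_, ?_, ?_, ?_, ?_⟩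
  · exact fun φ hφ t ht => (hGslice t ht).comp (hφ.comp hu)
  · exact fun φ _ => funext fun x => by simp [hG0]
  · exact fun φ _ => funext fun x => by simp [hGm]
  · exact fun φ _ t ht => adjEq_phiAdj_of_forall fun x => hGtrack _ t ht
  · exact fun t ht _ _ _ _ hφφ' =>
      adjEq_phiAdj_of_forall fun x => (hφφ'.2 (u x)).map_s11 (hGslice t ht)

lemma htpyOn_phiAdj_conj_id {h : A → A} (hh : DigCont α α h) (H : Htpy α α h id) :
    HtpyOn (PhiAdj α) (PhiAdj α) {φ | DigCont α α φ} {φ | DigCont α α φ}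
      (fun φ => h ∘ φ ∘ h) id :=
  (htpyOn_phiAdj_comp_comp_of_htpy_right H hh).trans
    (htpyOn_phiAdj_comp_comp_of_htpy_left digCont_id H)

end

theorem stmt11_general {X Y : Type*}
    (κ : X → X → Prop) (lam : Y → Y → Prop)
    (h : HtpyEquivOn κ lam (Set.univ : Set X) (Set.univ : Set Y)) :
    HtpyEquivOn (PhiAdj κ) (PhiAdj lam)
      {f : X → X | DigCont κ κ f} {g : Y → Y | DigCont lam lam g} := by
  obtain ⟨f, g, hf, hg, HX, HY⟩ := h
  rw [contOn_univ_iff] at hf hg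
  rw [htpyOn_univ_iff] at HX HY
  exact ⟨fun φ => f ∘ φ ∘ g, fun ψ => g ∘ ψ ∘ f,
    contOn_phiAdj_comp_comp hg hf, contOn_phiAdj_comp_comp hf hg,
    htpyOn_phiAdj_conj_id (hg.comp hf) HX, htpyOn_phiAdj_conj_id (hf.comp hg) HY⟩

/-- if `(X,κ)` and `(Y,lam)` have the same homotopy type, then so do the
function graphs `(X^X, Φ(κ,κ))` and `(Y^Y, Φ(lam,lam))`. -/
theorem stmt11 {X Y : Type*}
    (κ : X → X → Prop) (lam : Y → Y → Prop)
    (hκsymm : ∀ x y, κ x y → κ y x) (hκirr : ∀ x, ¬ κ x x)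
    (hlsymm : ∀ x y, lam x y → lam y x) (hlirr : ∀ y, ¬ lam y y)
    (h : HtpyEquivOn κ lam (Set.univ : Set X) (Set.univ : Set Y)) :
    HtpyEquivOn (PhiAdj κ) (PhiAdj lam)
      {f : X → X | DigCont κ κ f} {g : Y → Y | DigCont lam lam g} :=
  stmt11_general κ lam h
end

section
/- Let (X,κ) be a finite connected digital image. Then K(X,κ') is κ'-connected. -/
def AdjEqIn {A : Type*} (α : A → A → Prop) (S : Set A) (a b : A) : Prop :=
  a ∈ S ∧ b ∈ S ∧ AdjEq α a b

section Chain

variable {A : Type*} {α : A → A → Prop} {S : Set A} {a b c : A}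

theorem chain_iff_reflTransGen :
    Chain α S a b ↔ a ∈ S ∧ Relation.ReflTransGen (AdjEqIn α S) a b := by
  constructor
  · rintro ⟨n, p, rfl, rfl, hpS, hpadj⟩
    refine ⟨hpS 0 (Nat.zero_le n), ?_⟩
    suffices ∀ i ≤ n, Relation.ReflTransGen (AdjEqIn α S) (p 0) (p i) from this n le_rfl
    intro i hi
    induction i with
    | zero => exact .refl
    | succ i ih =>
      exact (ih (by omega)).tail ⟨hpS i (by omega), hpS (i + 1) hi, hpadj i hi⟩
  · rintro ⟨ha, h⟩
    induction h with
    | refl => exact ⟨0, fun _ => a, rfl, rfl, fun _ _ => ha, fun i hi => absurd hi (by omega)⟩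
    | @tail b c _ hbc ih =>
      obtain ⟨n, p, hp0, rfl, hpS, hpadj⟩ := ih
      refine ⟨n + 1, fun i => if i ≤ n then p i else c, by simp [hp0], by simp, ?_, ?_⟩
      · intro i hi
        by_cases hin : i ≤ n
        · simpa [hin] using hpS i hin
        · simpa [hin] using hbc.2.1
      · intro i hi
        rcases Nat.lt_succ_iff_lt_or_eq.mp hi with hi | rfl
        · simpa [hi.le, Nat.succ_le_of_lt hi] using hpadj i hi
        · simpa using hbc.2.2

theorem Chain.of_adjEq (ha : a ∈ S) (hb : b ∈ S) (hab : AdjEq α a b) : Chain α S a b :=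
  chain_iff_reflTransGen.mpr ⟨ha, .single ⟨ha, hb, hab⟩⟩

theorem Chain.refl (ha : a ∈ S) : Chain α S a a :=
  chain_iff_reflTransGen.mpr ⟨ha, .refl⟩

theorem Chain.trans (hab : Chain α S a b) (hbc : Chain α S b c) : Chain α S a c := by
  rw [chain_iff_reflTransGen] at *
  exact ⟨hab.1, hab.2.trans hbc.2⟩

theorem Chain.mono {T : Set A} (hST : S ⊆ T) (h : Chain α S a b) : Chain α T a b := by
  rw [chain_iff_reflTransGen] at *
  exact ⟨hST h.1,
    Relation.ReflTransGen.mono (fun x y hxy => ⟨hST hxy.1, hST hxy.2.1, hxy.2.2⟩) _ _ h.2⟩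

theorem Chain.symm (hα : ∀ x y, α x y → α y x) (h : Chain α S a b) : Chain α S b a := by
  have hadj : ∀ x y, AdjEqIn α S x y → AdjEqIn α S y x := fun x y ⟨hx, hy, hxy⟩ =>
    ⟨hy, hx, hxy.elim (fun h => .inl (hα x y h)) (fun h => .inr h.symm)⟩
  rw [chain_iff_reflTransGen] at *
  obtain ⟨ha, hab⟩ := h
  refine ⟨?_, Relation.ReflTransGen.mono (fun x y hxy => hadj y x hxy)
    _ _ (Relation.reflTransGen_swap.mpr hab)⟩
  induction hab with
  | refl => exact ha
  | tail _ hbc => exact hbc.2.1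

end Chain

theorem Chain.exists_adj_of_mem_of_notMem {A : Type*} {α : A → A → Prop} {T S : Set A}
    {a b : A} (h : Chain α T a b) (ha : a ∈ S) (hb : b ∉ S) : ∃ x ∈ S, ∃ y ∉ S, α x y := by
  rw [chain_iff_reflTransGen] at h
  obtain ⟨-, h⟩ := h
  induction h with
  | refl => exact absurd ha hb
  | @tail b c _ hbc ih =>
    by_cases hbS : b ∈ S
    · refine ⟨b, hbS, c, hb, hbc.2.2.resolve_right ?_⟩
      rintro rfl
      exact hb hbS
    · exact ih hbS

theorem ConnIn.insert_of_adj {A : Type*} {α : A → A → Prop} (hα : ∀ x y, α x y → α y x)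
    {S : Set A} (hS : ConnIn α S) {a x : A} (ha : a ∈ S) (hax : α a x) : ConnIn α (insert x S) := by
  have to_a : ∀ u ∈ insert x S, Chain α (insert x S) u a := by
    rintro u (rfl | hu)
    · exact .of_adjEq (Set.mem_insert u S) (Set.mem_insert_of_mem u ha) (.inl (hα a u hax))
    · exact Chain.mono (Set.subset_insert x S) (hS u hu a ha)
  exact fun u hu v hv => (to_a u hu).trans ((to_a v hv).symm hα)

theorem hyperAdj_insert {X : Type*} [DecidableEq X] {κ : X → X → Prop} {A : Finset X}
    {a x : X} (ha : a ∈ A) (hx : x ∉ A) (hxa : κ x a) : HyperAdj κ A (insert x A) := by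
  refine ⟨fun h => hx (h ▸ Finset.mem_insert_self x A), ?_, ?_⟩
  · exact fun b hb => ⟨b, Finset.mem_insert_of_mem hb, .inr rfl⟩
  · intro b hb
    rcases Finset.mem_insert.mp hb with rfl | hb
    · exact ⟨a, ha, .inl hxa⟩
    · exact ⟨b, hb, .inr rfl⟩

theorem hyperAdj_symm {X : Type*} (κ : X → X → Prop) (A B : Finset X)
    (h : HyperAdj κ A B) : HyperAdj κ B A :=
  ⟨h.1.symm, h.2.2, h.2.1⟩

theorem chain_univ_of_mem_kSet {X : Type*} [Fintype X] {κ : X → X → Prop}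
    (hκ : ∀ x y, κ x y → κ y x) (hconn : ConnIn κ (Set.univ : Set X)) {A : Finset X}
    (hA : A ∈ KSet κ) : Chain (HyperAdj κ) (KSet κ) A Finset.univ := by
  classical
  induction hk : Aᶜ.card generalizing A with
  | zero =>
    obtain rfl : A = Finset.univ := by simpa using hk
    exact .refl hA
  | succ k ih =>
    obtain ⟨a₀, ha₀⟩ := hA.1
    obtain ⟨y, hy⟩ : ∃ y, y ∉ A := by
      by_contra! h
      simp [Finset.eq_univ_of_forall h] at hk
    obtain ⟨a, ha, x, hx, hax⟩ :=
      Chain.exists_adj_of_mem_of_notMem (S := (A : Set X)) (hconn a₀ trivial y trivial) ha₀ hy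
    have hxA : insert x A ∈ KSet κ :=
      ⟨Finset.insert_nonempty x A, by simpa using hA.2.insert_of_adj hκ ha hax⟩
    have hcard : (insert x A)ᶜ.card = k := by
      rw [Finset.compl_insert, Finset.card_erase_of_mem (Finset.mem_compl.mpr hx), hk]
      rfl
    exact (Chain.of_adjEq hA hxA (.inl (hyperAdj_insert ha hx (hκ a x hax)))).trans
      (ih hxA hcard)

theorem stmt14_general {X : Type*} [Finite X]
    (κ : X → X → Prop)
    (hκsymm : ∀ x y, κ x y → κ y x)
    (hconn : ConnIn κ (Set.univ : Set X)) :
    ConnIn (HyperAdj κ) (KSet κ) := by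
  cases nonempty_fintype X
  intro A hA B hB
  exact (chain_univ_of_mem_kSet hκsymm hconn hA).trans
    ((chain_univ_of_mem_kSet hκsymm hconn hB).symm (hyperAdj_symm κ))

/-- if `(X,κ)` is a finite connected digital image, then `K(X,κ')` is
`κ'`-connected. -/
theorem stmt14 {X : Type*} [Finite X]
    (κ : X → X → Prop)
    (hκsymm : ∀ x y, κ x y → κ y x) (hκirr : ∀ x, ¬ κ x x)
    (hconn : ConnIn κ (Set.univ : Set X)) :
    ConnIn (HyperAdj κ) (KSet κ) :=
  stmt14_general κ hκsymm hconn
end
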